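/- Let X be a symmetric n×n real matrix with all entries in {−1, 1} and set Y := (X + J_n)/2, which has entries in {0,1}. Then X is PSD if and only if diag(Y) = 1_n, Y is PSD, and rank(Y) ≤ 2. -/

import Mathlib

open Matrix

lemma quad3 {n : ℕ} (M : Matrix (Fin n) (Fin n) ℝ) (hM : M.PosSemidef)
    (i j k : Fin n) (hij : i ≠ j) (hik : i ≠ k) (hjk : j ≠ k) (a b c : ℝ) :
    0 ≤ a*a*M i i + b*b*M j j + c*c*M k k
      + a*b*(M i j + M j i) + a*c*(M i k + M k i) + b*c*(M j k + M k j) := by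
  have h := hM.dotProduct_mulVec_nonneg (Pi.single i a + Pi.single j b + Pi.single k c)
  simp only [star_trivial, mulVec_add, dotProduct_add, add_dotProduct,
    mulVec_single, single_dotProduct, Pi.single_apply,
    if_pos rfl, if_neg hij, if_neg hik, if_neg hjk, if_neg (Ne.symm hij),
    if_neg (Ne.symm hik), if_neg (Ne.symm hjk), mul_zero, add_zero, zero_add, mul_ite,
    Pi.smul_apply, op_smul_eq_mul, col_apply] at h
  nlinarith [h]

lemma outer_psd {n : ℕ} (v : Fin n → ℝ) : (vecMulVec v v).PosSemidef := by
  rw [vecMulVec_eq (Fin 1)]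
  have : replicateCol (Fin 1) v = (replicateRow (Fin 1) v)ᴴ := by
    rw [conjTranspose_replicateRow, star_trivial]
  rw [this]
  exact posSemidef_conjTranspose_mul_self _

lemma outer_rank {n : ℕ} (v w : Fin n → ℝ) : (vecMulVec v w).rank ≤ 1 := by
  rw [vecMulVec_eq (Fin 1)]
  exact (rank_mul_le_left _ _).trans ((rank_le_card_width _).trans (by simp))

lemma rank_add_le' {n : ℕ} (A B : Matrix (Fin n) (Fin n) ℝ) :
    (A + B).rank ≤ A.rank + B.rank := by
  rw [Matrix.rank, Matrix.rank, Matrix.rank, mulVecLin_add]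
  have hle : LinearMap.range (A.mulVecLin + B.mulVecLin) ≤
      LinearMap.range A.mulVecLin ⊔ LinearMap.range B.mulVecLin := by
    rintro x ⟨y, rfl⟩
    exact Submodule.add_mem_sup ⟨y, rfl⟩ ⟨y, rfl⟩
  exact (Submodule.finrank_mono hle).trans
    (Submodule.finrank_add_le_finrank_add_finrank _ _)

lemma rank_ge_three {n : ℕ} (M : Matrix (Fin n) (Fin n) ℝ) (i j k : Fin n)
    (hii : M i i = 1) (hjj : M j j = 1) (hkk : M k k = 1)
    (hij : M i j = 0) (hji : M j i = 0) (hik : M i k = 0) (hki : M k i = 0)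
    (hjk : M j k = 0) (hkj : M k j = 0) : 3 ≤ M.rank := by
  rw [Matrix.rank]
  have hmem : ∀ t : Fin n, (M *ᵥ Pi.single t 1) ∈ LinearMap.range M.mulVecLin :=
    fun t => ⟨Pi.single t 1, rfl⟩
  set v : Fin 3 → (LinearMap.range M.mulVecLin) :=
    ![⟨M *ᵥ Pi.single i 1, hmem i⟩, ⟨M *ᵥ Pi.single j 1, hmem j⟩, ⟨M *ᵥ Pi.single k 1, hmem k⟩]
  have hli : LinearIndependent ℝ v := by
    rw [Fintype.linearIndependent_iff]
    intro g hg
    have hg' : g 0 • (M *ᵥ Pi.single i 1) + g 1 • (M *ᵥ Pi.single j 1)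
        + g 2 • (M *ᵥ Pi.single k 1) = 0 := by
      have := congrArg (Submodule.subtype _) hg
      simpa [v, Fin.sum_univ_three] using this
    have key : ∀ t : Fin n, g 0 * M t i + g 1 * M t j + g 2 * M t k = 0 := by
      intro t
      have := congrFun hg' t
      simpa [mulVec_single] using this
    have h0 := key i
    have h1 := key j
    have h2 := key k
    rw [hii, hij, hik] at h0
    rw [hji, hjj, hjk] at h1
    rw [hki, hkj, hkk] at h2
    intro t
    fin_cases t <;> simp <;> linarith
  simpa using hli.fintype_card_le_finrank

/-- The `n × n` all-ones matrix `J_n`. -/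
def allOnesM (n : ℕ) : Matrix (Fin n) (Fin n) ℝ := Matrix.of fun _ _ => 1

/-- Let `X` be a symmetric `{±1}` matrix and `Y := (X + J_n)/2`.  Then `X` is PSD iff
`diag Y = 1_n`, `Y` is PSD, and `rank Y ≤ 2`. -/
theorem stmt7 (n : ℕ) (X : Matrix (Fin n) (Fin n) ℝ) (hsym : X.IsSymm)
    (hpm : ∀ i j, X i j = -1 ∨ X i j = 1) :
    X.PosSemidef ↔
      (((1 / 2 : ℝ) • (X + allOnesM n)).diag = fun _ => 1) ∧
      ((1 / 2 : ℝ) • (X + allOnesM n)).PosSemidef ∧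
      ((1 / 2 : ℝ) • (X + allOnesM n)).rank ≤ 2 := by
  rcases Nat.eq_zero_or_pos n with hn | hn
  · subst hn
    constructor
    · intro _
      refine ⟨funext fun i => i.elim0, ⟨by ext i j; exact i.elim0, fun x => by rw [Finsupp.sum, Finset.eq_empty_of_isEmpty x.support]; simp⟩, ?_⟩
      exact (rank_le_card_width _).trans (by simp)
    · intro _
      exact ⟨by ext i j; exact i.elim0, fun x => by rw [Finsupp.sum, Finset.eq_empty_of_isEmpty x.support]; simp⟩
  set z : Fin n := ⟨0, hn⟩
  set Y : Matrix (Fin n) (Fin n) ℝ := (1 / 2 : ℝ) • (X + allOnesM n) with hYdef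
  have hYapp : ∀ i j, Y i j = (X i j + 1) / 2 := by
    intro i j; simp [hYdef, allOnesM]; ring
  constructor
  · intro hX
    -- diagonal of X is 1
    have hd : ∀ i, X i i = 1 := by
      intro i
      have h := hX.dotProduct_mulVec_nonneg (Pi.single i 1)
      simp only [star_trivial, mulVec_single, single_dotProduct, one_mul, mul_one,
        Pi.smul_apply, op_smul_eq_mul, col_apply] at h
      rcases hpm i i with h1 | h1
      · rw [h1] at h; linarith
      · exact h1
    -- transitivity
    have htrans : ∀ i j k, X i k = X i j * X j k := by
      intro i j k
      by_cases hij : i = j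
      · subst hij; rw [hd, one_mul]
      by_cases hjk : j = k
      · subst hjk; rw [hd, mul_one]
      by_cases hik : i = k
      · subst hik
        rw [hd, hsym.apply i j]
        rcases hpm i j with h1 | h1 <;> rw [h1] <;> norm_num
      have h := quad3 X hX i j k hij hik hjk (X j k) (X i k) (X i j)
      rw [hd i, hd j, hd k, hsym.apply i j, hsym.apply i k, hsym.apply j k] at h
      rcases hpm i j with h1 | h1 <;> rcases hpm i k with h2 | h2 <;>
        rcases hpm j k with h3 | h3 <;> rw [h1, h2, h3] at h ⊢ <;> norm_num at h <;> norm_num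
    set s : Fin n → ℝ := fun i => X i z with hs
    have hXe : X = vecMulVec s s := by
      ext i j
      rw [vecMulVec_apply]
      have h := htrans i z j
      rw [← hsym.apply z j] at h
      exact h
    set o : Fin n → ℝ := fun _ => 1 with ho
    have hYe : Y = vecMulVec ((1/2 : ℝ) • s) s + vecMulVec ((1/2 : ℝ) • o) o := by
      ext i j
      rw [hYapp, hXe]
      simp [vecMulVec_apply]
      ring
    refine ⟨?_, ?_, ?_⟩
    · funext i
      simp [Matrix.diag, hYapp, hd i, ho]
    · rw [posSemidef_iff_dotProduct_mulVec]
      constructor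
      · have : Yᵀ = Y := by
          ext i j
          rw [transpose_apply, hYapp, hYapp, hsym.apply i j]
        rw [Matrix.IsHermitian, conjTranspose_eq_transpose_of_trivial, this]
      · intro x
        rw [hYe]
        have h1 := (outer_psd s).dotProduct_mulVec_nonneg x
        have h2 := (outer_psd o).dotProduct_mulVec_nonneg x
        have e1 : vecMulVec ((1/2 : ℝ) • s) s = (1/2 : ℝ) • vecMulVec s s := by
          ext i j; simp [vecMulVec_apply]; ring
        have e2 : vecMulVec ((1/2 : ℝ) • o) o = (1/2 : ℝ) • vecMulVec o o := by
          ext i j; simp [vecMulVec_apply]; ring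
        rw [e1, e2, add_mulVec, dotProduct_add, smul_mulVec, smul_mulVec,
          dotProduct_smul, dotProduct_smul]
        simp only [star_trivial] at *
        have : (0:ℝ) ≤ (1/2 : ℝ) := by norm_num
        positivity
    · rw [hYe]
      exact (rank_add_le' _ _).trans (by
        have := outer_rank ((1/2 : ℝ) • s) s
        have := outer_rank ((1/2 : ℝ) • o) o
        omega)
  · rintro ⟨hdiag, hYpsd, hrank⟩
    have hd : ∀ i, X i i = 1 := by
      intro i
      have := congrFun hdiag i
      simp only [Matrix.diag] at this
      rw [hYapp] at this
      linarith
    -- transitivity of the "equal" relation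
    have htrans : ∀ i j k, X i j = 1 → X j k = 1 → X i k = 1 := by
      intro i j k h1 h2
      rcases hpm i k with h3 | h3; swap; · exact h3
      exfalso
      have hij : i ≠ j := by rintro rfl; rw [h2] at h3; norm_num at h3
      have hjk : j ≠ k := by rintro rfl; rw [h1] at h3; norm_num at h3
      have hik : i ≠ k := by rintro rfl; rw [hd] at h3; norm_num at h3
      have h := quad3 Y hYpsd i j k hij hik hjk 1 (-1) 1
      simp only [hYapp] at h
      rw [hd i, hd j, hd k, hsym.apply i j, hsym.apply i k, hsym.apply j k,
        h1, h2, h3] at h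
      norm_num at h
    -- at most two classes
    have h2cls : ∀ i j k, X i j = -1 → X i k = -1 → X j k = 1 := by
      intro i j k h1 h2
      rcases hpm j k with h3 | h3; swap; · exact h3
      exfalso
      have e0 : ∀ t, Y t t = 1 := by
        intro t; rw [hYapp, hd]; norm_num
      have e1 : ∀ a b, X a b = -1 → Y a b = 0 := by
        intro a b hab; rw [hYapp, hab]; norm_num
      have h1' : X j i = -1 := by rw [hsym.apply i j]; exact h1
      have h2' : X k i = -1 := by rw [hsym.apply i k]; exact h2
      have h3' : X k j = -1 := by rw [hsym.apply j k]; exact h3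
      have := rank_ge_three Y i j k (e0 i) (e0 j) (e0 k)
        (e1 _ _ h1) (e1 _ _ h1') (e1 _ _ h2) (e1 _ _ h2') (e1 _ _ h3) (e1 _ _ h3')
      omega
    set s : Fin n → ℝ := fun i => X i z with hs
    have hstep : ∀ i j, X i j = X i z * X j z := by
      intro i j
      rcases hpm i z with ha | ha <;> rcases hpm j z with hb | hb
      · have hzi : X z i = -1 := by rw [← hsym.apply z i]; exact ha
        have hzj : X z j = -1 := by rw [← hsym.apply z j]; exact hb
        rw [h2cls z i j hzi hzj, ha, hb]; norm_num
      · rcases hpm i j with hc | hc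
        · rw [hc, ha, hb]; norm_num
        · exfalso
          have := htrans i j z hc hb
          rw [this] at ha; norm_num at ha
      · rcases hpm i j with hc | hc
        · rw [hc, ha, hb]; norm_num
        · exfalso
          have hji : X j i = 1 := by rw [hsym.apply i j]; exact hc
          have := htrans j i z hji ha
          rw [this] at hb; norm_num at hb
      · have hzj : X z j = 1 := by rw [← hsym.apply z j]; exact hb
        rw [htrans i z j ha hzj, ha, hb]; norm_num
    have hXe : X = vecMulVec s s := by
      ext i j
      rw [vecMulVec_apply]
      exact hstep i j
    rw [hXe]
    exact outer_psd s
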